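/- Farthest-first traversal 2-approximation: Let (V,d) be a finite metric space with |V| ≥ k. Let S be any set of k points produced by farthest-first traversal (starting from an arbitrary point, repeatedly adding the point maximizing distance to the current set). Then D(V\S, S) ≤ 2·OPT, where OPT = min over all k-subsets T of max_{v∈V} min_{t∈T} d(v,t), and D(A,S) = max_{a∈A} min_{s∈S} d(a,s). -/

import Mathlib

/-!
Let `a` be any point and `r` its distance to the traversal `S = {s 0, …, s (k-1)}`. Each `s j`
was the farthest point from `{s 0, …, s (j-1)}` when chosen, and `S` only grows, so the `k + 1`
points `s 0, …, s (k-1), a` are pairwise at distance at least `r`. Two of them share a nearest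
center of any `k`-set `T`, so the triangle inequality gives `r ≤ 2 · D(V, T)`.
-/

open Finset

variable {V : Type*} [MetricSpace V] [Fintype V] [DecidableEq V]

/-- Distance of a point to a finite set: min_{u∈T} d(v,u), as an infimum in ℝ. -/
noncomputable def minDistTo (v : V) (T : Finset V) : ℝ :=
  sInf ((fun u => dist v u) '' (T : Set V))

/-- Directed group distance D(A,T) = max_{a∈A} min_{t∈T} d(a,t). -/
noncomputable def groupDist (A T : Finset V) : ℝ :=
  sSup ((fun a => minDistTo a T) '' (A : Set V))

section

variable {X : Type*} [MetricSpace X]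

lemma minDistTo_le_dist (v : X) {u : X} {T : Finset X} (hu : u ∈ T) :
    minDistTo v T ≤ dist v u :=
  csInf_le (T.finite_toSet.image _).bddBelow ⟨u, hu, rfl⟩

lemma minDistTo_nonneg (v : X) (T : Finset X) : 0 ≤ minDistTo v T :=
  Real.sInf_nonneg (by rintro _ ⟨u, -, rfl⟩; exact dist_nonneg)

lemma exists_minDistTo_eq_dist (v : X) {T : Finset X} (hT : T.Nonempty) :
    ∃ t ∈ T, minDistTo v T = dist v t := by
  obtain ⟨t, ht, he⟩ :=
    ((coe_nonempty.2 hT).image (fun u => dist v u)).csInf_mem (T.finite_toSet.image _)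
  exact ⟨t, ht, he.symm⟩

lemma minDistTo_anti {T T' : Finset X} (hT : T.Nonempty) (h : T ⊆ T') (v : X) :
    minDistTo v T' ≤ minDistTo v T :=
  csInf_le_csInf (T'.finite_toSet.image _).bddBelow ((coe_nonempty.2 hT).image _)
    (Set.image_mono (coe_subset.2 h))

lemma minDistTo_le_groupDist {a : X} {A : Finset X} (T : Finset X) (ha : a ∈ A) :
    minDistTo a T ≤ groupDist A T :=
  le_csSup (A.finite_toSet.image _).bddAbove ⟨a, ha, rfl⟩

lemma groupDist_nonneg (A T : Finset X) : 0 ≤ groupDist A T :=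
  Real.sSup_nonneg (by rintro _ ⟨a, -, rfl⟩; exact minDistTo_nonneg a T)

lemma exists_dist_le_groupDist {a : X} {A T : Finset X} (hT : T.Nonempty) (ha : a ∈ A) :
    ∃ t ∈ T, dist a t ≤ groupDist A T := by
  obtain ⟨t, ht, he⟩ := exists_minDistTo_eq_dist a hT
  exact ⟨t, ht, he ▸ minDistTo_le_groupDist T ha⟩

lemma groupDist_le {A T : Finset X} {c : ℝ} (hc : 0 ≤ c) (h : ∀ a ∈ A, minDistTo a T ≤ c) :
    groupDist A T ≤ c :=
  Real.sSup_le (by rintro _ ⟨a, ha, rfl⟩; exact h a ha) hc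

lemma le_two_mul_groupDist_of_pairwise {ι : Type*} [Fintype ι] {p : ι → X} {A T : Finset X}
    {r : ℝ} (hpA : ∀ i, p i ∈ A) (hT : T.Nonempty) (hcard : #T < Fintype.card ι)
    (hp : Pairwise fun i j => r ≤ dist (p i) (p j)) :
    r ≤ 2 * groupDist A T := by
  choose t htT hdist using fun i => exists_dist_le_groupDist hT (hpA i)
  obtain ⟨i, -, j, -, hij, hshared⟩ :=
    exists_ne_map_eq_of_card_lt_of_maps_to (s := univ) (by simpa using hcard)
      (fun i _ => htT i)
  calc r ≤ dist (p i) (p j) := hp hij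
    _ ≤ dist (p i) (t i) + dist (p j) (t j) := by rw [hshared]; exact dist_triangle_right _ _ _
    _ ≤ 2 * groupDist A T := by linarith [hdist i, hdist j]

variable [DecidableEq X]

def IsFarthestFirst (s : ℕ → X) (k : ℕ) : Prop :=
  ∀ i, 1 ≤ i → i < k → ∀ v : X,
    minDistTo v ((range i).image s) ≤ minDistTo (s i) ((range i).image s)

namespace IsFarthestFirst

variable {s : ℕ → X} {k : ℕ}

lemma minDistTo_le_dist (h : IsFarthestFirst s k) (v : X) {i j : ℕ} (hij : i < j)
    (hjk : j < k) : minDistTo v ((range k).image s) ≤ dist (s i) (s j) := by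
  have hsi : s i ∈ (range j).image s := mem_image_of_mem s (mem_range.2 hij)
  calc minDistTo v ((range k).image s)
      ≤ minDistTo v ((range j).image s) :=
        minDistTo_anti ⟨_, hsi⟩ (image_subset_image (range_subset_range.2 hjk.le)) v
    _ ≤ minDistTo (s j) ((range j).image s) := h j (by omega) hjk v
    _ ≤ dist (s j) (s i) := _root_.minDistTo_le_dist _ hsi
    _ = dist (s i) (s j) := dist_comm _ _

lemma pairwise_le_dist (h : IsFarthestFirst s k) (v : X) :
    Pairwise fun x y : Option (Fin k) =>
      minDistTo v ((range k).image s) ≤ dist (x.elim v (s ·)) (y.elim v (s ·)) := by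
  have hmem (i : Fin k) : s i ∈ (range k).image s := mem_image_of_mem s (mem_range.2 i.2)
  rintro (_ | i) (_ | j) hne
  · exact absurd rfl hne
  · exact _root_.minDistTo_le_dist v (hmem j)
  · exact (_root_.minDistTo_le_dist v (hmem i)).trans_eq (dist_comm _ _)
  · rcases lt_or_gt_of_ne (Fin.val_ne_of_ne (fun h => hne (congrArg some h))) with hij | hji
    · exact h.minDistTo_le_dist v hij j.2
    · exact (h.minDistTo_le_dist v hji i.2).trans_eq (dist_comm _ _)

lemma minDistTo_le_two_mul_groupDist (h : IsFarthestFirst s k) (v : X) {A T : Finset X}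
    (hvA : v ∈ A) (hsA : ∀ i, s i ∈ A) (hT : T.Nonempty) (hTk : #T ≤ k) :
    minDistTo v ((range k).image s) ≤ 2 * groupDist A T :=
  le_two_mul_groupDist_of_pairwise (p := fun x : Option (Fin k) => x.elim v (s ·))
    (by rintro (_ | i) <;> simp [hvA, hsA]) hT (by simpa using Nat.lt_succ_of_le hTk)
    (h.pairwise_le_dist v)

end IsFarthestFirst

end

/-- farthest-first traversal is a 2-approximation for the
k-center objective. -/
theorem farthest_first_two_approx
    (k : ℕ) (hk : 1 ≤ k) (hcard : k ≤ Fintype.card V)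
    (s : ℕ → V)
    (hfft : ∀ i, 1 ≤ i → i < k → ∀ v : V,
      minDistTo v ((Finset.range i).image s) ≤ minDistTo (s i) ((Finset.range i).image s)) :
    groupDist (Finset.univ \ (Finset.range k).image s) ((Finset.range k).image s) ≤
      2 * sInf {x : ℝ | ∃ T : Finset V, T.card = k ∧ x = groupDist Finset.univ T} := by
  have hne : {x : ℝ | ∃ T : Finset V, T.card = k ∧ x = groupDist univ T}.Nonempty := by
    obtain ⟨T, -, hT⟩ := exists_subset_card_eq (s := (univ : Finset V)) (by simpa using hcard)
    exact ⟨_, T, hT, rfl⟩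
  have hopt_nonneg : 0 ≤ sInf {x : ℝ | ∃ T : Finset V, T.card = k ∧ x = groupDist univ T} :=
    Real.sInf_nonneg fun _ ⟨T, _, hx⟩ => hx ▸ groupDist_nonneg univ T
  refine groupDist_le (mul_nonneg zero_le_two hopt_nonneg) fun a _ => ?_
  refine (div_le_iff₀' two_pos).1 (le_csInf hne ?_)
  rintro _ ⟨T, hTk, rfl⟩
  refine (div_le_iff₀' two_pos).2 ?_
  exact IsFarthestFirst.minDistTo_le_two_mul_groupDist (s := s) hfft a (mem_univ a)
    (fun _ => mem_univ _) (card_pos.1 (by omega)) hTk.le
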